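/- Let L1 < L2 be reals and k, τ, m > 0, l ∈ ℝ \ {0}. Suppose u¹ ∈ H²(L1,L2), θ ∈ H¹(L1,L2), q ∈ H¹(L1,L2) satisfy: q = 0 a.e. on (L1,L2); (1 + τ·i·l)·q + k·θ' = 0 in L²; i·l·θ + k·q' + i·l·m·(u¹)' = 0 in L²; and (i·l)²·u¹ - a·(u¹)'' + m·θ' = 0 in L² for some a > 0. Then θ is a.e. equal to a constant, (u¹)'' = 0 a.e., and u¹ = 0 a.e. on (L1, L2). -/

import Mathlib

/-!
Since `q` vanishes identically, the Cattaneo law `(1 + τ i l) q + k θ' = 0` gives `θ' = 0`, so `θ`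
is a constant `c`. Then `q' = 0` as well, and the energy equation reads `i l (c + m (u¹)') = 0`,
so `(u¹)'` is constant and `(u¹)'' = 0`. The wave equation collapses to `(i l)² u¹ = 0`, and
`l ≠ 0` forces `u¹ = 0`.
-/

open Set

section ConstantOnIcc

variable {E : Type*} [NormedAddCommGroup E] [NormedSpace ℝ E] {f f' : ℝ → E} {a b : ℝ}

theorem eqOn_Icc_of_hasDerivAt_eq_zero (hf : ∀ x ∈ Icc a b, HasDerivAt f (f' x) x)
    (hf' : ∀ x ∈ Icc a b, f' x = 0) : ∀ x ∈ Icc a b, f x = f a :=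
  constant_of_has_deriv_right_zero
    (fun x hx => (hf x hx).continuousAt.continuousWithinAt)
    (fun x hx => hf' x (Ico_subset_Icc_self hx) ▸ (hf x (Ico_subset_Icc_self hx)).hasDerivWithinAt)

/-- The derivative at an endpoint is a two-sided one, yet the one-sided derivative seen by
`Icc a b` already determines it. -/
theorem hasDerivAt_eq_zero_of_eqOn_Icc (hab : a < b) {c : E}
    (hf : ∀ x ∈ Icc a b, HasDerivAt f (f' x) x) (hc : ∀ x ∈ Icc a b, f x = c) :
    ∀ x ∈ Icc a b, f' x = 0 := fun x hx =>
  (uniqueDiffOn_Icc hab x hx).eq_deriv _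
    ((hf x hx).hasDerivWithinAt.congr (fun y hy => (hc y hy).symm) (hc x hx).symm)
    (hasDerivWithinAt_const x _ c)

end ConstantOnIcc

theorem stmt_11_general (L1 L2 k τ m a : ℝ) (hL : L1 < L2) (hk : 0 < k)
    (hm : 0 < m) (l : ℝ) (hl : l ≠ 0)
    (u1 u1' u1'' θ θ' q q' : ℝ → ℂ)
    (hu1' : ∀ x ∈ Set.Icc L1 L2, HasDerivAt u1' (u1'' x) x)
    (hθ : ∀ x ∈ Set.Icc L1 L2, HasDerivAt θ (θ' x) x)
    (hq : ∀ x ∈ Set.Icc L1 L2, HasDerivAt q (q' x) x)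
    (hq0 : ∀ x ∈ Set.Icc L1 L2, q x = 0)
    (heq1 : ∀ x ∈ Set.Icc L1 L2,
      (1 + (τ : ℂ) * Complex.I * (l : ℂ)) * q x + (k : ℂ) * θ' x = 0)
    (heq2 : ∀ x ∈ Set.Icc L1 L2,
      Complex.I * (l : ℂ) * θ x + (k : ℂ) * q' x + Complex.I * (l : ℂ) * (m : ℂ) * u1' x = 0)
    (heq3 : ∀ x ∈ Set.Icc L1 L2,
      (Complex.I * (l : ℂ)) ^ 2 * u1 x - (a : ℂ) * u1'' x + (m : ℂ) * θ' x = 0) :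
    (∃ c : ℂ, ∀ x ∈ Set.Icc L1 L2, θ x = c) ∧
      (∀ x ∈ Set.Ioo L1 L2, u1'' x = 0) ∧
      (∀ x ∈ Set.Icc L1 L2, u1 x = 0) := by
  have hk0 : (k : ℂ) ≠ 0 := by exact_mod_cast hk.ne'
  have hm0 : (m : ℂ) ≠ 0 := by exact_mod_cast hm.ne'
  have hil : Complex.I * (l : ℂ) ≠ 0 := mul_ne_zero Complex.I_ne_zero (by exact_mod_cast hl)
  have hθ'0 : ∀ x ∈ Icc L1 L2, θ' x = 0 := fun x hx => by
    simpa [hq0 x hx, hk0] using heq1 x hx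
  have hθc := eqOn_Icc_of_hasDerivAt_eq_zero hθ hθ'0
  have hq'0 := hasDerivAt_eq_zero_of_eqOn_Icc hL hq hq0
  have hu1'c : ∀ x ∈ Icc L1 L2, u1' x = -θ L1 / m := fun x hx => by
    have h := heq2 x hx
    rw [hq'0 x hx, hθc x hx] at h
    have h' : Complex.I * l * (θ L1 + m * u1' x) = 0 := by linear_combination h
    field_simp
    linear_combination (mul_eq_zero.mp h').resolve_left hil
  have hu1''0 := hasDerivAt_eq_zero_of_eqOn_Icc hL hu1' hu1'c
  refine ⟨⟨θ L1, hθc⟩, fun x hx => hu1''0 x (Ioo_subset_Icc_self hx), fun x hx => ?_⟩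
  have h := heq3 x hx
  rw [hu1''0 x hx, hθ'0 x hx, mul_zero, mul_zero, sub_zero, add_zero] at h
  exact (mul_eq_zero.mp h).resolve_left (pow_ne_zero 2 hil)

/-- Middle-bar part of the proof that `i·l` (`l ≠ 0`) is not an eigenvalue. -/
theorem stmt_11 (L1 L2 k τ m a : ℝ) (hL : L1 < L2) (hk : 0 < k) (hτ : 0 < τ)
    (hm : 0 < m) (ha : 0 < a) (l : ℝ) (hl : l ≠ 0)
    (u1 u1' u1'' θ θ' q q' : ℝ → ℂ)
    (hu1 : ∀ x ∈ Set.Icc L1 L2, HasDerivAt u1 (u1' x) x)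
    (hu1' : ∀ x ∈ Set.Icc L1 L2, HasDerivAt u1' (u1'' x) x)
    (hθ : ∀ x ∈ Set.Icc L1 L2, HasDerivAt θ (θ' x) x)
    (hq : ∀ x ∈ Set.Icc L1 L2, HasDerivAt q (q' x) x)
    (hq0 : ∀ x ∈ Set.Icc L1 L2, q x = 0)
    (heq1 : ∀ x ∈ Set.Icc L1 L2,
      (1 + (τ : ℂ) * Complex.I * (l : ℂ)) * q x + (k : ℂ) * θ' x = 0)
    (heq2 : ∀ x ∈ Set.Icc L1 L2,
      Complex.I * (l : ℂ) * θ x + (k : ℂ) * q' x + Complex.I * (l : ℂ) * (m : ℂ) * u1' x = 0)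
    (heq3 : ∀ x ∈ Set.Icc L1 L2,
      (Complex.I * (l : ℂ)) ^ 2 * u1 x - (a : ℂ) * u1'' x + (m : ℂ) * θ' x = 0) :
    (∃ c : ℂ, ∀ x ∈ Set.Icc L1 L2, θ x = c) ∧
      (∀ x ∈ Set.Ioo L1 L2, u1'' x = 0) ∧
      (∀ x ∈ Set.Icc L1 L2, u1 x = 0) :=
  stmt_11_general L1 L2 k τ m a hL hk hm l hl u1 u1' u1'' θ θ' q q' hu1' hθ hq hq0 heq1 heq2 heq3
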